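/- Let T, N be positive integers, let λ₁, …, λ_N > 0 with ∑_{i=1}^N λ_i = 1, and for i = 1, …, N let L^i ∈ ℝ^{T×T} be lower triangular matrices with all entries nonnegative and all diagonal entries strictly positive. Let 𝔻 denote the group of diagonal T×T matrices with diagonal entries in {+1, −1}. Then the weighted arithmetic mean L* := ∑_{i=1}^N λ_i L^i is a minimizer over lower triangular L ∈ ℝ^{T×T} of the adapted barycenter functional G(L) := ∑_{i=1}^N λ_i min_{E ∈ 𝔻} ‖L − L^i E‖_F². In particular, for AR(1) processes with nonnegative autoregressive coefficients and positive volatilities, the adapted Bures–Wasserstein barycenter coincides with the Knothe–Rosenblatt barycenter ∑_i λ_i L^i. -/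

import Mathlib

open Matrix

/-- Squared Frobenius norm of a real matrix: `‖A‖_F² = tr(Aᵀ A)`. -/
noncomputable def frobSq {m n : Type*} [Fintype m] [Fintype n] (A : Matrix m n ℝ) : ℝ :=
  Matrix.trace (Aᵀ * A)

/-- `O ∈ O(d)`: a real orthogonal matrix. -/
def IsOrth {d : ℕ} (O : Matrix (Fin d) (Fin d) ℝ) : Prop :=
  O * Oᵀ = 1 ∧ Oᵀ * O = 1

/-- `L ∈ 𝕃`: block-lower triangular w.r.t. `T` blocks of size `d`
(indices are pairs `(i, t)` with `i : Fin d` the within-block index and `t : Fin T`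
the block index); the block `L_{t,s}` vanishes for `t < s`. -/
def BlockLT {d T : ℕ} (L : Matrix (Fin d × Fin T) (Fin d × Fin T) ℝ) : Prop :=
  ∀ p q : Fin d × Fin T, p.2 < q.2 → L p q = 0

/-- `O ∈ 𝕆`: block-diagonal with orthogonal `d × d` diagonal blocks. -/
def BlockOrth {d T : ℕ} (O : Matrix (Fin d × Fin T) (Fin d × Fin T) ℝ) : Prop :=
  ∃ f : Fin T → Matrix (Fin d) (Fin d) ℝ, (∀ t, IsOrth (f t)) ∧ O = Matrix.blockDiagonal f

/-- Truncated `t`-th column `L̃_t ∈ ℝ^{(T−t)d×d}` (0-based `t`): the rows of the `t`-th block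
column of `L` from block row `t` on. -/
def truncCol {d T : ℕ} (L : Matrix (Fin d × Fin T) (Fin d × Fin T) ℝ) (t : Fin T) :
    Matrix (Fin (T - t.val) × Fin d) (Fin d) ℝ :=
  fun p j => L (p.2, ⟨t.val + p.1.val, by have := p.1.isLt; omega⟩) (j, t)

/-- Column covariance `Σ̃_t^L = L̃_t L̃_tᵀ`. -/
noncomputable def colCov {d T : ℕ} (L : Matrix (Fin d × Fin T) (Fin d × Fin T) ℝ) (t : Fin T) :
    Matrix (Fin (T - t.val) × Fin d) (Fin (T - t.val) × Fin d) ℝ :=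
  truncCol L t * (truncCol L t)ᵀ

/-- The positive semidefinite square root of a PSD matrix (junk value `0` otherwise). -/
noncomputable def sqrtPSD {n : Type*} [Fintype n] [DecidableEq n] (P : Matrix n n ℝ) :
    Matrix n n ℝ :=
  by classical exact (if h : P.PosSemidef then
    (h.1.eigenvectorUnitary : Matrix n n ℝ) *
      Matrix.diagonal ((RCLike.ofReal : ℝ → ℝ) ∘ Real.sqrt ∘ h.1.eigenvalues) *
      star (h.1.eigenvectorUnitary : Matrix n n ℝ) else 0)

/-- The Bures–Wasserstein distance between (PSD) matrices. -/
noncomputable def dBW {n : Type*} [Fintype n] [DecidableEq n] (S1 S2 : Matrix n n ℝ) : ℝ :=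
  Real.sqrt (Matrix.trace S1 + Matrix.trace S2 -
    2 * Matrix.trace (sqrtPSD (sqrtPSD S2 * S1 * sqrtPSD S2)))

/-- `E ∈ 𝔻`: a diagonal matrix with diagonal entries `±1`. -/
def IsSignDiag {T : ℕ} (E : Matrix (Fin T) (Fin T) ℝ) : Prop :=
  ∃ eps : Fin T → ℝ, (∀ t, eps t = 1 ∨ eps t = -1) ∧ E = Matrix.diagonal eps


lemma frobSq_apply {m n : Type*} [Fintype m] [Fintype n] (A : Matrix m n ℝ) :
    frobSq A = ∑ j, ∑ i, (A i j)^2 := by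
  unfold frobSq Matrix.trace
  simp [Matrix.diag, Matrix.mul_apply, Matrix.transpose_apply, sq]

lemma frobSq_nonneg {m n : Type*} [Fintype m] [Fintype n] (A : Matrix m n ℝ) :
    0 ≤ frobSq A := by
  rw [frobSq_apply]; positivity

lemma signSet_subset {T : ℕ} (M A : Matrix (Fin T) (Fin T) ℝ) :
    {x : ℝ | ∃ E, IsSignDiag E ∧ x = frobSq (M - A * E)} ⊆
      Set.range (fun e : Fin T → Bool =>
        frobSq (M - A * Matrix.diagonal (fun t => if e t then (1:ℝ) else -1))) := by
  classical
  rintro x ⟨E, ⟨eps, heps, rfl⟩, rfl⟩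
  refine ⟨fun t => decide (eps t = 1), ?_⟩
  have : (fun t => if decide (eps t = 1) = true then (1:ℝ) else -1) = eps := by
    funext t
    rcases heps t with h | h
    · simp [h]
    · simp [h]
      intro h'; linarith
  simp only [this]

lemma signSet_finite {T : ℕ} (M A : Matrix (Fin T) (Fin T) ℝ) :
    Set.Finite {x : ℝ | ∃ E, IsSignDiag E ∧ x = frobSq (M - A * E)} :=
  Set.Finite.subset (Set.finite_range _) (signSet_subset M A)

lemma signSet_nonempty {T : ℕ} (M A : Matrix (Fin T) (Fin T) ℝ) :
    Set.Nonempty {x : ℝ | ∃ E, IsSignDiag E ∧ x = frobSq (M - A * E)} :=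
  ⟨frobSq (M - A * Matrix.diagonal (fun _ => (1:ℝ))),
    ⟨Matrix.diagonal (fun _ => (1:ℝ)), ⟨fun _ => 1, fun _ => Or.inl rfl, rfl⟩, rfl⟩⟩

lemma signSet_bdd {T : ℕ} (M A : Matrix (Fin T) (Fin T) ℝ) :
    BddBelow {x : ℝ | ∃ E, IsSignDiag E ∧ x = frobSq (M - A * E)} := by
  refine ⟨0, ?_⟩
  rintro x ⟨E, _, rfl⟩
  exact frobSq_nonneg _

lemma key_scalar {N : ℕ} (lam a e : Fin N → ℝ) (hlam : ∀ i, 0 ≤ lam i)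
    (hsum : ∑ i, lam i = 1) (ha : ∀ i, 0 ≤ a i)
    (he : ∀ i, e i = 1 ∨ e i = -1) (k : ℝ) :
    ∑ i, lam i * ((∑ j, lam j * a j) - a i)^2 ≤ ∑ i, lam i * (k - a i * e i)^2 := by
  set m := ∑ j, lam j * a j with hmdef
  set b := ∑ i, lam i * (a i * e i) with hbdef
  have hm0 : 0 ≤ m := Finset.sum_nonneg fun i _ => mul_nonneg (hlam i) (ha i)
  have habs : |b| ≤ m := by
    calc |b| ≤ ∑ i, |lam i * (a i * e i)| := Finset.abs_sum_le_sum_abs _ _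
    _ = ∑ i, lam i * a i := by
        refine Finset.sum_congr rfl fun i _ => ?_
        rcases he i with h | h <;>
          simp [h, abs_of_nonneg, mul_nonneg (hlam i) (ha i)]
    _ = m := rfl
  have hL : ∑ i, lam i * (m - a i)^2 = (∑ i, lam i * (a i)^2) - m^2 := by
    have h1 : ∀ i ∈ Finset.univ, lam i * (m - a i)^2
        = m^2 * lam i - 2*m*(lam i * a i) + lam i * (a i)^2 := fun i _ => by ring
    rw [Finset.sum_congr rfl h1, Finset.sum_add_distrib, Finset.sum_sub_distrib,
      ← Finset.mul_sum, ← Finset.mul_sum, hsum, ← hmdef]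
    ring
  have hR : ∑ i, lam i * (k - a i * e i)^2 = (∑ i, lam i * (a i)^2) - 2*k*b + k^2 := by
    have h1 : ∀ i ∈ Finset.univ, lam i * (k - a i * e i)^2
        = k^2 * lam i - 2*k*(lam i * (a i * e i)) + lam i * (a i)^2 := by
      intro i _
      rcases he i with h | h <;> (rw [h]; ring)
    rw [Finset.sum_congr rfl h1, Finset.sum_add_distrib, Finset.sum_sub_distrib,
      ← Finset.mul_sum, ← Finset.mul_sum, hsum, ← hbdef]
    ring
  rw [hL, hR]
  have h2 := abs_le.mp habs
  nlinarith [sq_nonneg (k - b), sq_nonneg (m - b), sq_nonneg (m + b)]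


/-- For lower triangular `Lⁱ ∈ ℝ^{T×T}` with nonnegative entries and strictly
positive diagonals (Cholesky factors of AR(1) processes with nonnegative coefficients and
positive volatilities), the weighted mean `∑ᵢ λᵢ Lⁱ` minimizes the adapted barycenter
functional `G(L) = ∑ᵢ λᵢ min_{E ∈ 𝔻} ‖L − LⁱE‖_F²` over lower triangular matrices; i.e. the
adapted Bures–Wasserstein barycenter is the Knothe–Rosenblatt barycenter. -/
theorem stmt14 (T N : ℕ) (hT : 0 < T) (hN : 0 < N)
    (lam : Fin N → ℝ) (hlam : ∀ i, 0 < lam i) (hsum : ∑ i, lam i = 1)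
    (L : Fin N → Matrix (Fin T) (Fin T) ℝ)
    (hLT : ∀ i, ∀ s t : Fin T, s < t → L i s t = 0)
    (hnn : ∀ i, ∀ s t : Fin T, 0 ≤ L i s t)
    (hdiag : ∀ i, ∀ t : Fin T, 0 < L i t t) :
    ∀ K : Matrix (Fin T) (Fin T) ℝ, (∀ s t : Fin T, s < t → K s t = 0) →
      (∑ i, lam i * sInf {x : ℝ | ∃ E, IsSignDiag E ∧
          x = frobSq ((∑ j, lam j • L j) - L i * E)})
        ≤ ∑ i, lam i * sInf {x : ℝ | ∃ E, IsSignDiag E ∧ x = frobSq (K - L i * E)} := by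
  intro K _hK
  set Lbar : Matrix (Fin T) (Fin T) ℝ := ∑ j, lam j • L j with hLbar
  -- attainment of each inf on the RHS
  have hattain : ∀ i : Fin N, ∃ eps : Fin T → ℝ, (∀ t, eps t = 1 ∨ eps t = -1) ∧
      sInf {x : ℝ | ∃ E, IsSignDiag E ∧ x = frobSq (K - L i * E)}
        = frobSq (K - L i * Matrix.diagonal eps) := by
    intro i
    have hmem := (signSet_nonempty K (L i)).csInf_mem (signSet_finite K (L i))
    obtain ⟨E, ⟨eps, heps, rfl⟩, hx⟩ := hmem
    exact ⟨eps, heps, hx⟩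
  choose eps heps hepsEq using hattain
  -- LHS inf is at most the value at E = 1
  have hLHS : ∀ i : Fin N,
      sInf {x : ℝ | ∃ E, IsSignDiag E ∧ x = frobSq (Lbar - L i * E)}
        ≤ frobSq (Lbar - L i) := by
    intro i
    refine csInf_le (signSet_bdd Lbar (L i)) ?_
    exact ⟨Matrix.diagonal (fun _ => (1:ℝ)), ⟨fun _ => 1, fun _ => Or.inl rfl, rfl⟩,
      by rw [Matrix.diagonal_one, mul_one]⟩
  have hcore : ∑ i, lam i * frobSq (Lbar - L i)
      ≤ ∑ i, lam i * frobSq (K - L i * Matrix.diagonal (eps i)) := by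
    have hentryL : ∀ i : Fin N, ∀ s t : Fin T,
        (Lbar - L i) s t = (∑ j, lam j * L j s t) - L i s t := by
      intro i s t
      simp [hLbar, Matrix.sub_apply, Matrix.sum_apply, Matrix.smul_apply, smul_eq_mul]
    have hentryR : ∀ i : Fin N, ∀ s t : Fin T,
        (K - L i * Matrix.diagonal (eps i)) s t = K s t - L i s t * eps i t := by
      intro i s t
      simp [Matrix.sub_apply, Matrix.mul_diagonal]
    calc ∑ i, lam i * frobSq (Lbar - L i)
        = ∑ t : Fin T, ∑ s : Fin T, ∑ i,
            lam i * ((∑ j, lam j * L j s t) - L i s t)^2 := by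
          simp_rw [frobSq_apply, Finset.mul_sum, hentryL]
          rw [Finset.sum_comm]
          refine Finset.sum_congr rfl fun t _ => Finset.sum_comm
      _ ≤ ∑ t : Fin T, ∑ s : Fin T, ∑ i,
            lam i * (K s t - L i s t * eps i t)^2 := by
          refine Finset.sum_le_sum fun t _ => Finset.sum_le_sum fun s _ => ?_
          exact key_scalar lam (fun i => L i s t) (fun i => eps i t)
            (fun i => (hlam i).le) hsum (fun i => hnn i s t) (fun i => heps i t) (K s t)
      _ = ∑ i, lam i * frobSq (K - L i * Matrix.diagonal (eps i)) := by
          simp_rw [frobSq_apply, Finset.mul_sum, hentryR]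
          symm
          rw [Finset.sum_comm]
          exact Finset.sum_congr rfl fun t _ => Finset.sum_comm
  calc (∑ i, lam i * sInf {x : ℝ | ∃ E, IsSignDiag E ∧ x = frobSq (Lbar - L i * E)})
      ≤ ∑ i, lam i * frobSq (Lbar - L i) :=
        Finset.sum_le_sum fun i _ =>
          mul_le_mul_of_nonneg_left (hLHS i) (hlam i).le
    _ ≤ ∑ i, lam i * frobSq (K - L i * Matrix.diagonal (eps i)) := hcore
    _ = ∑ i, lam i * sInf {x : ℝ | ∃ E, IsSignDiag E ∧ x = frobSq (K - L i * E)} := by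
        exact Finset.sum_congr rfl fun i _ => by rw [hepsEq i]
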